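/- arXiv:2509.01928 — 2 statements merged into one kernel-verified Lean document; each statement's English description precedes it below -/
import Mathlib

section
/- Let n ≥ 1, let J be a symmetric n×n real matrix with zero diagonal, let α, β > 0, and suppose μ = λ_min(J + αI) > 0. Let (x^(k)) be the DOCH iterates generated by x^(k+1) = T(x^(k)) from any x^(0) ∈ ℝⁿ, where T(y)_i = cbrt( β⁻¹ ((J + αI)y)_i ). Then for every k ≥ 0, the Hamiltonian H(x) = (β/4)·∑ x_i⁴ − (1/2) xᵀ(J + αI)x satisfies the descent inequality H(x^(k)) − H(x^(k+1)) ≥ (μ/2)·‖x^(k+1) − x^(k)‖₂². -/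
open Matrix

/-- The Hamiltonian `H(x) = (β/4)·∑ xᵢ⁴ − (1/2) xᵀ (J + αI) x`. -/
noncomputable def hamiltonianH {n : ℕ} (J : Matrix (Fin n) (Fin n) ℝ) (α β : ℝ)
    (x : Fin n → ℝ) : ℝ :=
  β / 4 * ∑ i, x i ^ 4 - 1/2 * (x ⬝ᵥ ((J + α • 1) *ᵥ x))

lemma eigen_lb {n : ℕ} [Nonempty (Fin n)] (A : Matrix (Fin n) (Fin n) ℝ)
    (hA : A.IsHermitian) (v : Fin n → ℝ) :
    (⨅ i, hA.eigenvalues i) * ∑ i, v i ^ 2 ≤ v ⬝ᵥ (A *ᵥ v) := by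
  classical
  set b := hA.eigenvectorBasis with hb
  set w : EuclideanSpace ℝ (Fin n) := WithLp.toLp 2 v with hw
  have hinner : ∀ u u' : EuclideanSpace ℝ (Fin n),
      (inner ℝ u u' : ℝ) = (u : Fin n → ℝ) ⬝ᵥ (u' : Fin n → ℝ) := by
    intro u u'
    simp [PiLp.inner_apply, dotProduct, mul_comm]
  have hsymm : ∀ u u' : Fin n → ℝ, u ⬝ᵥ (A *ᵥ u') = (A *ᵥ u) ⬝ᵥ u' := by
    intro u u'
    rw [Matrix.dotProduct_mulVec, ← Matrix.mulVec_transpose]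
    have : Aᵀ = A := by
      rw [← Matrix.conjTranspose_eq_transpose_of_trivial]; exact hA
    rw [this]
  have hAw : ∀ j, (inner ℝ (b j) (WithLp.toLp 2 (A *ᵥ v : Fin n → ℝ) : EuclideanSpace ℝ (Fin n)) : ℝ)
      = hA.eigenvalues j * (inner ℝ (b j) w : ℝ) := by
    intro j
    have hm : (A *ᵥ (b j : Fin n → ℝ) : Fin n → ℝ)
        = hA.eigenvalues j • (b j : Fin n → ℝ) := hA.mulVec_eigenvectorBasis j
    rw [hinner, hsymm, hm, hinner]
    simp [dotProduct, Finset.mul_sum, smul_eq_mul, mul_assoc, hw]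
  have key : v ⬝ᵥ (A *ᵥ v) = ∑ j, hA.eigenvalues j * (inner ℝ (b j) w : ℝ) ^ 2 := by
    have h := b.sum_inner_mul_inner w (WithLp.toLp 2 (A *ᵥ v : Fin n → ℝ) : EuclideanSpace ℝ (Fin n))
    rw [hinner] at h
    rw [← h]
    congr 1; ext j
    rw [hAw j, real_inner_comm w (b j)]; ring
  have keyn : ∑ i, v i ^ 2 = ∑ j, (inner ℝ (b j) w : ℝ) ^ 2 := by
    have h := b.sum_inner_mul_inner w w
    rw [hinner] at h
    have h2 : (w : Fin n → ℝ) ⬝ᵥ (w : Fin n → ℝ) = ∑ i, v i ^ 2 := by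
      simp [dotProduct, pow_two, hw]
    rw [h2] at h
    rw [← h]
    congr 1; ext j
    rw [real_inner_comm w (b j)]; ring
  rw [key, keyn, Finset.mul_sum]
  apply Finset.sum_le_sum
  intro j _
  have hle : (⨅ i, hA.eigenvalues i) ≤ hA.eigenvalues j :=
    ciInf_le (Finite.bddBelow_range _) j
  exact mul_le_mul_of_nonneg_right hle (sq_nonneg _)

theorem stmt_10 (n : ℕ) (hn : 1 ≤ n) (J : Matrix (Fin n) (Fin n) ℝ)
    (hJ : J.IsHermitian) (hJd : ∀ i, J i i = 0)
    (α β : ℝ) (hα : 0 < α) (hβ : 0 < β)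
    (hA : (J + α • (1 : Matrix (Fin n) (Fin n) ℝ)).IsHermitian)
    (hμ : 0 < ⨅ i, hA.eigenvalues i)
    (T : (Fin n → ℝ) → (Fin n → ℝ))
    (hT : ∀ y : Fin n → ℝ, ∀ i, (T y i) ^ 3 = β⁻¹ * ((J + α • 1) *ᵥ y) i)
    (x : ℕ → Fin n → ℝ) (hx : ∀ k, x (k + 1) = T (x k)) :
    ∀ k : ℕ,
      ((⨅ i, hA.eigenvalues i) / 2) * ∑ i, (x (k + 1) i - x k i) ^ 2
        ≤ hamiltonianH J α β (x k) - hamiltonianH J α β (x (k + 1)) := by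
  simp only [hamiltonianH]
  intro k
  haveI : Nonempty (Fin n) := ⟨⟨0, hn⟩⟩
  set A := J + α • (1 : Matrix (Fin n) (Fin n) ℝ) with hAdef
  set u := x k with hu
  set u' := x (k+1) with hu'
  set d : Fin n → ℝ := fun i => u' i - u i with hd
  -- symmetry
  have hsymm : ∀ p q : Fin n → ℝ, p ⬝ᵥ (A *ᵥ q) = q ⬝ᵥ (A *ᵥ p) := by
    intro p q
    rw [Matrix.dotProduct_mulVec, ← Matrix.mulVec_transpose]
    have hAt : Aᵀ = A := by rw [← Matrix.conjTranspose_eq_transpose_of_trivial]; exact hA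
    rw [hAt, dotProduct_comm]
  -- cubic identity from hT
  have hcube : ∀ i, (A *ᵥ u) i = β * u' i ^ 3 := by
    intro i
    have h := hT (x k) i
    rw [← hx k] at h
    rw [hu', h]
    field_simp
    rfl
  -- d ⬝ᵥ A *ᵥ u = β * Σ d i * u' i ^ 3
  have hdAu : d ⬝ᵥ (A *ᵥ u) = ∑ i, β * (d i * u' i ^ 3) := by
    simp only [dotProduct]
    congr 1; ext i
    rw [hcube i]; ring
  -- quadratic expansion
  have hquad : d ⬝ᵥ (A *ᵥ d) = u' ⬝ᵥ (A *ᵥ u') - 2 * (u ⬝ᵥ (A *ᵥ u')) + u ⬝ᵥ (A *ᵥ u) := by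
    have hdv : d = u' - u := by ext i; simp [hd]
    rw [hdv, Matrix.mulVec_sub, sub_dotProduct, dotProduct_sub,
      dotProduct_sub, hsymm u' u]
    ring
  have hdAu2 : d ⬝ᵥ (A *ᵥ u) = u' ⬝ᵥ (A *ᵥ u) - u ⬝ᵥ (A *ᵥ u) := by
    have hdv : d = u' - u := by ext i; simp [hd]
    rw [hdv, sub_dotProduct]
  -- pointwise nonneg
  have hpt : ∀ i, 0 ≤ β / 4 * u i ^ 4 - β / 4 * u' i ^ 4 + β * (d i * u' i ^ 3) := by
    intro i
    have h4 : 0 ≤ u i ^ 4 + 3 * u' i ^ 4 - 4 * u i * u' i ^ 3 := by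
      nlinarith [sq_nonneg (u i - u' i), sq_nonneg (u i + u' i),
        mul_nonneg (sq_nonneg (u i - u' i)) (sq_nonneg (u i + u' i)),
        mul_nonneg (sq_nonneg (u i - u' i)) (sq_nonneg (u' i))]
    have : β / 4 * u i ^ 4 - β / 4 * u' i ^ 4 + β * (d i * u' i ^ 3)
        = β / 4 * (u i ^ 4 + 3 * u' i ^ 4 - 4 * u i * u' i ^ 3) := by
      simp only [hd]; ring
    rw [this]
    positivity
  have hsum : 0 ≤ ∑ i, (β / 4 * u i ^ 4 - β / 4 * u' i ^ 4 + β * (d i * u' i ^ 3)) :=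
    Finset.sum_nonneg fun i _ => hpt i
  -- eigen bound
  have heig : (⨅ i, hA.eigenvalues i) * ∑ i, d i ^ 2 ≤ d ⬝ᵥ (A *ᵥ d) := eigen_lb A hA d
  -- assemble
  have hsplit : ∑ i, (β / 4 * u i ^ 4 - β / 4 * u' i ^ 4 + β * (d i * u' i ^ 3))
      = β / 4 * ∑ i, u i ^ 4 - β / 4 * ∑ i, u' i ^ 4 + ∑ i, β * (d i * u' i ^ 3) := by
    rw [Finset.sum_add_distrib, Finset.sum_sub_distrib, ← Finset.mul_sum, ← Finset.mul_sum]
  have hident : (β / 4 * ∑ i, u i ^ 4 - 1/2 * (u ⬝ᵥ (A *ᵥ u)))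
      - (β / 4 * ∑ i, u' i ^ 4 - 1/2 * (u' ⬝ᵥ (A *ᵥ u')))
      = 1/2 * (d ⬝ᵥ (A *ᵥ d))
        + ∑ i, (β / 4 * u i ^ 4 - β / 4 * u' i ^ 4 + β * (d i * u' i ^ 3)) := by
    rw [hsplit, ← hdAu, hquad, hdAu2, hsymm u u']
    ring
  have : ∑ i, (u' i - u i) ^ 2 = ∑ i, d i ^ 2 := by simp [hd]
  rw [this, hident]
  linarith
end

section
/- Let n ≥ 1, let J be a symmetric n×n real matrix with zero diagonal, and let α, β > 0. Suppose x* ∈ ℝⁿ is a fixed point of the DOCH map T with x*_i ≠ 0 for every i, and suppose the spectral norm (largest singular value) of the matrix M = (1/(3β))·D⁻² (J + αI), where D = diag(x*₁, …, x*_n), satisfies ‖M‖₂ < 1. Then the Hessian ∇²H(x*) = 3β·diag((x*₁)², …, (x*_n)²) − (J + αI) is positive definite, and hence x* is a strict local minimizer of the Hamiltonian H. -/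
open Matrix RealInnerProductSpace

private theorem herm_of_symm {n : ℕ} (A : Matrix (Fin n) (Fin n) ℝ) (h : Aᵀ = A) :
    A.IsHermitian := by
  ext i j
  rw [conjTranspose_apply, star_trivial]
  exact (congrFun (congrFun h j) i).symm

private theorem rayleigh_lower {n : ℕ} (A : Matrix (Fin n) (Fin n) ℝ) (hA : A.IsHermitian)
    (lam : ℝ) (hlam : ∀ j, lam ≤ hA.eigenvalues j) (h : Fin n → ℝ) :
    lam * ∑ i, h i ^ 2 ≤ h ⬝ᵥ (A *ᵥ h) := by
  classical
  set b := hA.eigenvectorBasis with hb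
  set v : EuclideanSpace ℝ (Fin n) := WithLp.toLp 2 h with hvdef
  set c : Fin n → ℝ := fun j => b.repr v j with hc
  have hv : (∑ j, c j • b j) = v := b.sum_repr v
  have hinner : ∀ w : EuclideanSpace ℝ (Fin n), ⟪v, w⟫ = ∑ i, h i * w i := by
    intro w; simp [PiLp.inner_apply, hvdef, mul_comm]
  have hcj : ∀ j, ⟪v, b j⟫ = c j := by
    intro j
    rw [real_inner_comm]
    exact (b.repr_apply_apply v j).symm
  have hnorm : ∑ i, h i ^ 2 = ∑ j, c j ^ 2 := by
    have h2 : ⟪v, (∑ j, c j • b j : EuclideanSpace ℝ (Fin n))⟫ = ∑ j, c j ^ 2 := by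
      rw [inner_sum]
      refine Finset.sum_congr rfl fun j _ => ?_
      rw [real_inner_smul_right, hcj j]; ring
    rw [hv] at h2
    rw [← h2, hinner v]
    refine Finset.sum_congr rfl fun i _ => by ring
  have hAv : (WithLp.toLp 2 (A *ᵥ h) : EuclideanSpace ℝ (Fin n)) = ∑ j, c j • (hA.eigenvalues j • b j) := by
    have : h = WithLp.ofLp v := rfl
    rw [this, ← hv, WithLp.ofLp_sum, mulVec_sum, WithLp.toLp_sum]
    refine Finset.sum_congr rfl fun j _ => ?_
    rw [WithLp.ofLp_smul, mulVec_smul, WithLp.toLp_smul]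
    congr 1
    rw [hA.mulVec_eigenvectorBasis j]; rfl
  have hq : h ⬝ᵥ (A *ᵥ h) = ∑ j, hA.eigenvalues j * c j ^ 2 := by
    have h1 : h ⬝ᵥ (A *ᵥ h) = ⟪v, (WithLp.toLp 2 (A *ᵥ h) : EuclideanSpace ℝ (Fin n))⟫ := by
      rw [hinner]; rfl
    rw [h1, hAv, inner_sum]
    refine Finset.sum_congr rfl fun j _ => ?_
    rw [real_inner_smul_right, real_inner_smul_right, hcj j]; ring
  rw [hq, hnorm, Finset.mul_sum]
  refine Finset.sum_le_sum fun j _ => ?_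
  exact mul_le_mul_of_nonneg_right (hlam j) (sq_nonneg _)

set_option maxHeartbeats 1000000 in
theorem stmt_17 (n : ℕ) (hn : 1 ≤ n) (J : Matrix (Fin n) (Fin n) ℝ)
    (hJs : J.IsSymm) (hJd : ∀ i, J i i = 0)
    (α β : ℝ) (hα : 0 < α) (hβ : 0 < β)
    (T : (Fin n → ℝ) → (Fin n → ℝ))
    (hT : ∀ y : Fin n → ℝ, ∀ i, (T y i) ^ 3 = β⁻¹ * ((J + α • 1) *ᵥ y) i)
    (xstar : Fin n → ℝ) (hfix : xstar = T xstar)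
    (hnz : ∀ i, xstar i ≠ 0)
    -- `M = (1/(3β)) D⁻² (J + αI)` with `D = diag(x*)`
    (M : Matrix (Fin n) (Fin n) ℝ)
    (hM : M = (Matrix.diagonal fun i => 1 / (3 * β * xstar i ^ 2)) * (J + α • 1))
    -- spectral norm of `M` is `< 1`: some `c < 1` bounds `‖Mv‖₂ / ‖v‖₂`
    (hMnorm : ∃ c : ℝ, c < 1 ∧ ∀ v : Fin n → ℝ,
      Real.sqrt (∑ i, ((M *ᵥ v) i) ^ 2) ≤ c * Real.sqrt (∑ i, v i ^ 2)) :
    ((3 * β) • Matrix.diagonal (fun i => xstar i ^ 2) - (J + α • 1)).PosDef ∧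
      ∃ ε : ℝ, 0 < ε ∧ ∀ y : Fin n → ℝ, y ≠ xstar →
        Real.sqrt (∑ i, (y i - xstar i) ^ 2) < ε →
        hamiltonianH J α β xstar < hamiltonianH J α β y := by
  classical
  obtain ⟨c, hc1, hcB⟩ := hMnorm
  set B : Matrix (Fin n) (Fin n) ℝ := J + α • 1 with hBdef
  set A : Matrix (Fin n) (Fin n) ℝ :=
    (3 * β) • Matrix.diagonal (fun i => xstar i ^ 2) - B with hAdef
  have hBt : Bᵀ = B := by
    rw [hBdef, transpose_add, transpose_smul, transpose_one, hJs.eq]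
  have hAt : Aᵀ = A := by
    rw [hAdef, transpose_sub, transpose_smul, hBt, Matrix.diagonal_transpose]
  have hA : A.IsHermitian := herm_of_symm A hAt
  -- fixed point equation
  have hBx : ∀ i, (B *ᵥ xstar) i = β * xstar i ^ 3 := by
    intro i
    have h3 := hT xstar i
    rw [← hfix] at h3
    rw [h3]
    field_simp
  -- positivity of sums of squares of nonzero vectors
  have sumsq_pos : ∀ w : Fin n → ℝ, (∃ i, w i ≠ 0) → 0 < ∑ i, w i ^ 2 := by
    rintro w ⟨i, hi⟩
    exact Finset.sum_pos' (fun j _ => sq_nonneg _)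
      ⟨i, Finset.mem_univ i, by positivity⟩
  -- all eigenvalues of A are positive
  have eig_pos : ∀ j, 0 < hA.eigenvalues j := by
    intro j
    by_contra hle
    push_neg at hle
    set μ := hA.eigenvalues j with hμ
    set w : Fin n → ℝ := ⇑(hA.eigenvectorBasis j) with hw
    have hAw : A *ᵥ w = μ • w := hA.mulVec_eigenvectorBasis j
    have hwne : ∃ i, w i ≠ 0 := by
      have h0 : hA.eigenvectorBasis j ≠ 0 := hA.eigenvectorBasis.orthonormal.ne_zero j
      by_contra hcon
      push_neg at hcon
      exact h0 (by ext i; exact hcon i)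
    -- B *ᵥ w in terms of μ
    have hBw : ∀ i, (B *ᵥ w) i = 3 * β * xstar i ^ 2 * w i - μ * w i := by
      intro i
      have : (A *ᵥ w) i = μ * w i := by rw [hAw]; rfl
      rw [hAdef, sub_mulVec, smul_mulVec] at this
      have hd : ((3 * β) • (Matrix.diagonal (fun i => xstar i ^ 2) *ᵥ w)) i
          = 3 * β * (xstar i ^ 2 * w i) := by
        simp [mulVec_diagonal]
      have := this
      simp only [Pi.sub_apply] at this
      rw [hd] at this
      linarith [this]
    -- M *ᵥ w pointwise
    have hMw : ∀ i, (M *ᵥ w) i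
        = 1 / (3 * β * xstar i ^ 2) * (3 * β * xstar i ^ 2 * w i - μ * w i) := by
      intro i
      rw [hM, ← mulVec_mulVec]
      rw [mulVec_diagonal]
      rw [hBw i]
    -- each coordinate of M *ᵥ w is at least |w i|
    have hsq : ∀ i, w i ^ 2 ≤ ((M *ᵥ w) i) ^ 2 := by
      intro i
      rw [hMw i]
      have hs : 0 < 3 * β * xstar i ^ 2 := by
        have := hnz i
        positivity
      set s := 3 * β * xstar i ^ 2 with hsdef
      have he : 1 / s * (s * w i - μ * w i) = (1 - μ / s) * w i := by
        field_simp
      rw [he]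
      have h1 : (1 : ℝ) ≤ 1 - μ / s := by
        have : μ / s ≤ 0 := div_nonpos_of_nonpos_of_nonneg hle hs.le
        linarith
      have hu2 : (1:ℝ) ≤ (1 - μ / s) ^ 2 := by nlinarith
      nlinarith [mul_le_mul_of_nonneg_right hu2 (sq_nonneg (w i))]
    have hsum : ∑ i, w i ^ 2 ≤ ∑ i, ((M *ᵥ w) i) ^ 2 :=
      Finset.sum_le_sum fun i _ => hsq i
    have hwpos : 0 < ∑ i, w i ^ 2 := sumsq_pos w hwne
    have hsqrtpos : 0 < Real.sqrt (∑ i, w i ^ 2) := Real.sqrt_pos.mpr hwpos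
    have hmono : Real.sqrt (∑ i, w i ^ 2) ≤ Real.sqrt (∑ i, ((M *ᵥ w) i) ^ 2) :=
      Real.sqrt_le_sqrt hsum
    have := hcB w
    nlinarith [this, hmono, hsqrtpos, hc1]
  -- minimum eigenvalue
  have hne : (Finset.univ : Finset (Fin n)).Nonempty := ⟨⟨0, hn⟩, Finset.mem_univ _⟩
  set lam : ℝ := Finset.univ.inf' hne hA.eigenvalues with hlamdef
  have hlam : ∀ j, lam ≤ hA.eigenvalues j := fun j => Finset.inf'_le _ (Finset.mem_univ j)
  have hlampos : 0 < lam := by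
    obtain ⟨j, _, hj⟩ := Finset.exists_mem_eq_inf' hne hA.eigenvalues
    rw [hlamdef, hj]
    exact eig_pos j
  -- positive definiteness
  have hPD : A.PosDef := by
    refine Matrix.PosDef.of_dotProduct_mulVec_pos hA fun v hv => ?_
    have hstar : star v = v := funext fun i => star_trivial _
    rw [hstar]
    have hvne : ∃ i, v i ≠ 0 := Function.ne_iff.mp hv
    have h1 := rayleigh_lower A hA lam hlam v
    have h2 : 0 < lam * ∑ i, v i ^ 2 := mul_pos hlampos (sumsq_pos v hvne)
    linarith
  refine ⟨hPD, ?_⟩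
  -- symmetry of B as a bilinear form
  have hsym : ∀ u w : Fin n → ℝ, u ⬝ᵥ (B *ᵥ w) = w ⬝ᵥ (B *ᵥ u) := by
    intro u w
    rw [dotProduct_mulVec]
    have : u ᵥ* B = B *ᵥ u := by rw [← hBt, mulVec_transpose, hBt]
    rw [this, dotProduct_comm]
  -- the exact expansion of H around the fixed point
  have key : ∀ y : Fin n → ℝ,
      hamiltonianH J α β y = hamiltonianH J α β xstar
        + (1/2 * ((fun i => y i - xstar i) ⬝ᵥ (A *ᵥ fun i => y i - xstar i))
          + β * ∑ i, xstar i * (y i - xstar i) ^ 3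
          + β/4 * ∑ i, (y i - xstar i) ^ 4) := by
    intro y
    set h : Fin n → ℝ := fun i => y i - xstar i with hhdef
    have hy : y = xstar + h := by funext i; simp [hhdef]
    set S1 := ∑ i, xstar i ^ 3 * h i with hS1
    set S2 := ∑ i, xstar i ^ 2 * h i ^ 2 with hS2
    set S3 := ∑ i, xstar i * h i ^ 3 with hS3
    set S4 := ∑ i, h i ^ 4 with hS4
    have e4 : ∑ i, y i ^ 4
        = ∑ i, xstar i ^ 4 + (4*S1 + 6*S2 + 4*S3 + S4) := by
      have e : ∑ i, y i ^ 4 = ∑ i, (xstar i ^ 4 + (4*(xstar i ^ 3 * h i)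
          + (6*(xstar i ^ 2 * h i ^ 2) + (4*(xstar i * h i ^ 3) + h i ^ 4)))) :=
        Finset.sum_congr rfl fun i _ => by
          have : y i = xstar i + h i := by rw [hy]; rfl
          rw [this]; ring
      rw [e]
      simp only [Finset.sum_add_distrib, ← Finset.mul_sum]
      ring
    have hBx' : h ⬝ᵥ (B *ᵥ xstar) = β * S1 := by
      simp only [dotProduct, hS1, Finset.mul_sum]
      exact Finset.sum_congr rfl fun i _ => by rw [hBx i]; ring
    have ecross : y ⬝ᵥ (B *ᵥ y)
        = xstar ⬝ᵥ (B *ᵥ xstar) + 2*(β*S1) + h ⬝ᵥ (B *ᵥ h) := by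
      rw [hy, mulVec_add, dotProduct_add, add_dotProduct, add_dotProduct]
      rw [hsym xstar h, hBx']
      ring
    have eA : h ⬝ᵥ (A *ᵥ h) = 3*β*S2 - h ⬝ᵥ (B *ᵥ h) := by
      rw [hAdef, sub_mulVec, dotProduct_sub, smul_mulVec, dotProduct_smul]
      have : h ⬝ᵥ (Matrix.diagonal (fun i => xstar i ^ 2) *ᵥ h) = S2 := by
        simp only [dotProduct, mulVec_diagonal, hS2]
        exact Finset.sum_congr rfl fun i _ => by ring
      rw [this]
      simp [smul_eq_mul]
    show _ = _ + (1/2 * (h ⬝ᵥ (A *ᵥ h)) + β * S3 + β/4 * S4)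
    rw [eA]
    unfold hamiltonianH
    rw [← hBdef, e4, ecross]
    ring
  -- upper bound for entries of xstar
  set X := Real.sqrt (∑ i, xstar i ^ 2) with hX
  have hX0 : 0 ≤ X := Real.sqrt_nonneg _
  have hXb : ∀ i, |xstar i| ≤ X := by
    intro i
    rw [hX, ← Real.sqrt_sq_eq_abs]
    exact Real.sqrt_le_sqrt (Finset.single_le_sum (fun j _ => sq_nonneg (xstar j))
      (Finset.mem_univ i))
  set ε := (lam/2) / (β * X + 1) with hε
  have hden : 0 < β * X + 1 := by positivity
  have hεpos : 0 < ε := by positivity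
  refine ⟨ε, hεpos, ?_⟩
  intro y hyne hyr
  set h : Fin n → ℝ := fun i => y i - xstar i with hhdef
  set S := ∑ i, h i ^ 2 with hSdef
  have hSpos : 0 < S := by
    apply sumsq_pos
    obtain ⟨i, hi⟩ := Function.ne_iff.mp hyne
    exact ⟨i, sub_ne_zero.mpr hi⟩
  set r := Real.sqrt S with hrdef
  have hrpos : 0 < r := Real.sqrt_pos.mpr hSpos
  have hrε : r < ε := hyr
  have hrb : ∀ i, |h i| ≤ r := by
    intro i
    rw [hrdef, ← Real.sqrt_sq_eq_abs]
    exact Real.sqrt_le_sqrt (Finset.single_le_sum (fun j _ => sq_nonneg (h j))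
      (Finset.mem_univ i))
  -- quadratic term lower bound
  have hquad : lam * S ≤ h ⬝ᵥ (A *ᵥ h) := rayleigh_lower A hA lam hlam h
  -- cubic term lower bound
  have hcube : -(X * r * S) ≤ ∑ i, xstar i * h i ^ 3 := by
    have : ∀ i, -(X * (r * h i ^ 2)) ≤ xstar i * h i ^ 3 := by
      intro i
      have habs : |xstar i * h i ^ 3| ≤ X * (r * h i ^ 2) := by
        rw [abs_mul]
        have h3 : |h i ^ 3| = |h i| * h i ^ 2 := by
          rw [abs_pow, pow_succ, sq_abs, mul_comm]
        rw [h3]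
        exact mul_le_mul (hXb i) (mul_le_mul_of_nonneg_right (hrb i) (sq_nonneg _))
          (by positivity) hX0
      linarith [neg_abs_le (xstar i * h i ^ 3)]
    calc -(X * r * S) = ∑ i, -(X * (r * h i ^ 2)) := by
          simp only [hSdef, Finset.mul_sum, ← Finset.sum_neg_distrib]
          exact Finset.sum_congr rfl fun i _ => by ring
      _ ≤ _ := Finset.sum_le_sum fun i _ => this i
  have hquart : (0:ℝ) ≤ ∑ i, h i ^ 4 := Finset.sum_nonneg fun i _ => by positivity
  -- r is small enough
  have hsmall : β * X * r < lam / 2 := by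
    have h1 : β * X * r ≤ (β * X + 1) * r := by nlinarith
    have h2 : (β * X + 1) * r < (β * X + 1) * ε := by
      exact mul_lt_mul_of_pos_left hrε hden
    have h3 : (β * X + 1) * ε = lam / 2 := by
      rw [hε]; field_simp
    linarith
  have hkey := key y
  have hfinal : 0 < 1/2 * (h ⬝ᵥ (A *ᵥ h)) + β * (∑ i, xstar i * h i ^ 3)
      + β/4 * ∑ i, h i ^ 4 := by
    have hb3 : β * (-(X * r * S)) ≤ β * ∑ i, xstar i * h i ^ 3 :=
      mul_le_mul_of_nonneg_left hcube (le_of_lt hβ)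
    have t4 : 0 < (lam / 2 - β * X * r) * S := mul_pos (by linarith) hSpos
    have t3 : (0:ℝ) ≤ β / 4 * ∑ i, h i ^ 4 :=
      mul_nonneg (by positivity) hquart
    linarith [hquad, hb3, t4, t3]
  rw [hkey]
  linarith [hfinal]
end
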